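/- Let 𝔤 be a 3-dimensional real Lie algebra and (e, Θ) a left-invariant parallel Cauchy pair, let λ : ℝ → ℝ be smooth and nowhere zero, B_t := ∫₀^t λ_τ dτ. Case (i): suppose Θ_{ul} = 0, Θ_{un} ≠ 0, Θ_{ll} = Θ_{ln} = 0 and Θ_{nn} = −Θ_{uu}; set λ := |Θ_{un}|, y_t := λ·B_t + arctan(Θ_{uu}/λ), and let I be an interval containing 0 on which cos(y_t) ≠ 0. Define on I: e^t_u := (1 − Θ_{uu} B_t)·e_u − Θ_{un} B_t·e_n, e^t_l := e_l, e^t_n := (Θ_{uu}/Θ_{un} − (λ/Θ_{un})(1 − Θ_{uu} B_t)·tan(y_t))·e_u + (1 + λ B_t·tan(y_t))·e_n, and the symmetric family Θ^t with Θ^t_{uu} := λ·tan(y_t), Θ^t_{nn} := −λ·tan(y_t), Θ^t_{un} := Θ_{un}, and all other entries zero. Then {λ_t, e^t, Θ^t} satisfies the left-invariant parallel spinor flow equations (F1)–(F4) on I with e⁰ = e. Case (ii): the analogous statement holds exchanging the roles of l and n, i.e. if Θ_{un} = 0, Θ_{ul} ≠ 0, Θ_{nn} = Θ_{ln} = 0,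 Θ_{ll} = −Θ_{uu}, with λ := |Θ_{ul}|, then e^t_u := (1 − Θ_{uu} B_t)·e_u − Θ_{ul} B_t·e_l, e^t_n := e_n, e^t_l := (Θ_{uu}/Θ_{ul} − (λ/Θ_{ul})(1 − Θ_{uu} B_t)·tan(y_t))·e_u + (1 + λ B_t·tan(y_t))·e_l, together with Θ^t_{uu} = −Θ^t_{ll} = λ·tan(y_t), Θ^t_{ul} = Θ_{ul} and other entries zero, satisfies (F1)–(F4) on I with e⁰ = e. -/

import Mathlib

noncomputable section

variable {𝔤 : Type*} [LieRing 𝔤] [LieAlgebra ℝ 𝔤]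

/-- A global left-invariant coframe: a triple of covectors forming a basis of `𝔤*`. -/
def IsCoframe (e : Fin 3 → Module.Dual ℝ 𝔤) : Prop :=
  LinearIndependent ℝ e ∧ Submodule.span ℝ (Set.range e) = ⊤

/-- Equation (F1) of the left-invariant parallel spinor flow at time `t`:
`∂ₜ e^t_a(X) + λ_t Σ_b Θ^t_{ab} e^t_b(X) = 0`. -/
def F1At (lam : ℝ → ℝ) (Θ : ℝ → Matrix (Fin 3) (Fin 3) ℝ)
    (e : ℝ → Fin 3 → Module.Dual ℝ 𝔤) (t : ℝ) : Prop :=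
  ∀ (a : Fin 3) (X : 𝔤),
    HasDerivAt (fun s => e s a X) (-(lam t * ∑ b, Θ t a b * e t b X)) t

/-- Equation (F2) of the left-invariant parallel spinor flow at time `t`:
`−e^t_a([X,Y]) = Σ_b Θ^t_{ab} (e^t_b(X) e^t_u(Y) − e^t_b(Y) e^t_u(X))`. -/
def F2At (Θ : ℝ → Matrix (Fin 3) (Fin 3) ℝ)
    (e : ℝ → Fin 3 → Module.Dual ℝ 𝔤) (t : ℝ) : Prop :=
  ∀ (a : Fin 3) (X Y : 𝔤),
    -(e t a ⁅X, Y⁆) = ∑ b, Θ t a b * (e t b X * e t 0 Y - e t b Y * e t 0 X)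

/-- Equation (F3) of the left-invariant parallel spinor flow at time `t`:
`∂ₜ (Σ_a Θ^t_{ua} e^t_a(X)) = 0`. -/
def F3At (Θ : ℝ → Matrix (Fin 3) (Fin 3) ℝ)
    (e : ℝ → Fin 3 → Module.Dual ℝ 𝔤) (t : ℝ) : Prop :=
  ∀ X : 𝔤, HasDerivAt (fun s => ∑ a, Θ s 0 a * e s a X) 0 t

/-- Equation (F4) of the left-invariant parallel spinor flow at time `t`:
`Σ_a Θ^t_{ua} e^t_a([X,Y]) = 0`. -/
def F4At (Θ : ℝ → Matrix (Fin 3) (Fin 3) ℝ)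
    (e : ℝ → Fin 3 → Module.Dual ℝ 𝔤) (t : ℝ) : Prop :=
  ∀ X Y : 𝔤, ∑ a, Θ t 0 a * e t a ⁅X, Y⁆ = 0

/-- The integrability conditions of the left-invariant parallel spinor flow for the
pair `(λ_t, Θ^t_{ab})` at time `t` (indices `u,l,n` are `0,1,2`). -/
def IntegrabilityAt (lam : ℝ → ℝ) (Θ : ℝ → Matrix (Fin 3) (Fin 3) ℝ) (t : ℝ) : Prop :=
  deriv (fun s => Θ s 0 0) t
      = lam t * ((Θ t 0 0) ^ 2 + (Θ t 0 1) ^ 2 + (Θ t 0 2) ^ 2) ∧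
  deriv (fun s => Θ s 0 1) t = 0 ∧
  deriv (fun s => Θ s 0 2) t = 0 ∧
  deriv (fun s => Θ s 1 1) t = lam t * (Θ t 1 1 * Θ t 0 0 - (Θ t 0 1) ^ 2) ∧
  deriv (fun s => Θ s 1 2) t = lam t * (Θ t 1 2 * Θ t 0 0 - Θ t 0 2 * Θ t 0 1) ∧
  deriv (fun s => Θ s 2 2) t = lam t * (Θ t 2 2 * Θ t 0 0 - (Θ t 0 2) ^ 2) ∧
  Θ t 1 2 * Θ t 0 1 = Θ t 1 1 * Θ t 0 2 ∧
  Θ t 1 2 * Θ t 0 2 = Θ t 2 2 * Θ t 0 1 ∧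
  Θ t 1 1 * Θ t 0 1 + Θ t 1 2 * Θ t 0 2 + Θ t 0 1 * Θ t 0 0 = 0 ∧
  Θ t 1 2 * Θ t 0 1 + Θ t 2 2 * Θ t 0 2 + Θ t 0 2 * Θ t 0 0 = 0

/-- A left-invariant parallel Cauchy pair: a coframe `e` of `𝔤*` together with a symmetric
matrix `Θ` satisfying the constraint `−e_a([X,Y]) = Σ_b Θ_{ab}(e_b(X)e_u(Y) − e_b(Y)e_u(X))`. -/
def IsCauchyPair (e : Fin 3 → Module.Dual ℝ 𝔤) (Θ : Matrix (Fin 3) (Fin 3) ℝ) : Prop :=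
  IsCoframe e ∧ Θ.IsSymm ∧
  ∀ (a : Fin 3) (X Y : 𝔤),
    -(e a ⁅X, Y⁆) = ∑ b, Θ a b * (e b X * e 0 Y - e b Y * e 0 X)

/-- `B_t = ∫₀ᵗ λ_τ dτ`. -/
def Bfun (lam : ℝ → ℝ) (t : ℝ) : ℝ := ∫ τ in (0:ℝ)..t, lam τ

/-!
In both cases `Θ` is the traceless symmetric matrix `planeMatrix 0 q Θ_uu c` supported on the
plane of `u` and the active index `q` (`n` in case (i), `l` in case (ii)), with `c = Θ_uq`; the
third index is passive. The flow keeps this shape, `Θ^t = planeMatrix 0 q θ_t c`, and moves only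
`e_u, e_q`: `e^t_u = α e_u + β e_q`, `e^t_q = γ e_u + δ e_q`. The Cauchy constraint gives
`e_u([X,Y]) = -c (e_q ∧ e_u)(X,Y)` and `e_q([X,Y]) = Θ_uu (e_q ∧ e_u)(X,Y)`; with these, (F2)
and (F4) reduce to the conservation law `θ α + c γ = Θ_uu`, `θ β + c δ = c` for the row
`Σ_a Θ^t_{ua} e^t_a`, which is (F3). What remains is the linear system (F1) for
`α, β, γ, δ`; it holds because `τ = tan y_t` solves the Riccati equation
`τ' = |c| λ (1 + τ²)` and `|c|² = c²`.
-/

open Real Matrix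

theorem hasDerivAt_Bfun {lam : ℝ → ℝ} (hlam : Continuous lam) (t : ℝ) :
    HasDerivAt (Bfun lam) (lam t) t :=
  (hlam.integral_hasStrictDerivAt 0 t).hasDerivAt

@[simp]
theorem Bfun_zero (lam : ℝ → ℝ) : Bfun lam 0 = 0 :=
  intervalIntegral.integral_same

theorem HasDerivAt.tan {f : ℝ → ℝ} {f' x : ℝ} (hf : HasDerivAt f f' x) (hx : Real.cos (f x) ≠ 0) :
    HasDerivAt (fun s => Real.tan (f s)) ((1 + Real.tan (f x) ^ 2) * f') x := by
  have h := (hasDerivAt_tan hx).comp x hf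
  rwa [one_div, ← inv_one_add_tan_sq hx, inv_inv] at h

section PlaneMatrix

variable {ι : Type*} [Fintype ι] [DecidableEq ι]

def planeMatrix (i j : ι) (θ c : ℝ) : Matrix ι ι ℝ :=
  θ • (single i i 1 - single j j 1) + c • (single i j 1 + single j i 1)

variable {i j : ι} (θ c : ℝ) (F : ι → ℝ)

theorem planeMatrix_sum_mul_left (hij : i ≠ j) :
    ∑ b, planeMatrix i j θ c i b * F b = θ * F i + c * F j := by
  simp [planeMatrix, single_apply, hij.symm, add_mul, Finset.sum_add_distrib]

theorem planeMatrix_sum_mul_right (hij : i ≠ j) :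
    ∑ b, planeMatrix i j θ c j b * F b = c * F i - θ * F j := by
  simp [planeMatrix, single_apply, hij, add_mul, Finset.sum_add_distrib]
  ring

theorem planeMatrix_sum_mul_of_ne {a : ι} (hi : a ≠ i) (hj : a ≠ j) :
    ∑ b, planeMatrix i j θ c a b * F b = 0 := by
  simp [planeMatrix, hi.symm, hj.symm]

end PlaneMatrix

theorem planeMatrix_zero_one (θ c : ℝ) :
    planeMatrix (0 : Fin 3) 1 θ c = !![θ, c, 0; c, -θ, 0; 0, 0, 0] := by
  ext i j; fin_cases i <;> fin_cases j <;> simp [planeMatrix]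

theorem planeMatrix_zero_two (θ c : ℝ) :
    planeMatrix (0 : Fin 3) 2 θ c = !![θ, 0, c; 0, 0, 0; c, 0, -θ] := by
  ext i j; fin_cases i <;> fin_cases j <;> simp [planeMatrix]

theorem Matrix.IsSymm.eq_planeMatrix_zero_one {Θ : Matrix (Fin 3) (Fin 3) ℝ} (hΘ : Θ.IsSymm)
    (h02 : Θ 0 2 = 0) (h22 : Θ 2 2 = 0) (h12 : Θ 1 2 = 0) (h11 : Θ 1 1 = -Θ 0 0) :
    Θ = planeMatrix 0 1 (Θ 0 0) (Θ 0 1) := by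
  rw [planeMatrix_zero_one]
  ext i j
  fin_cases i <;> fin_cases j <;>
    simp [h02, h22, h12, h11, hΘ.apply 0 1, hΘ.apply 0 2, hΘ.apply 1 2]

theorem Matrix.IsSymm.eq_planeMatrix_zero_two {Θ : Matrix (Fin 3) (Fin 3) ℝ} (hΘ : Θ.IsSymm)
    (h01 : Θ 0 1 = 0) (h11 : Θ 1 1 = 0) (h12 : Θ 1 2 = 0) (h22 : Θ 2 2 = -Θ 0 0) :
    Θ = planeMatrix 0 2 (Θ 0 0) (Θ 0 2) := by
  rw [planeMatrix_zero_two]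
  ext i j
  fin_cases i <;> fin_cases j <;>
    simp [h01, h11, h12, h22, hΘ.apply 0 1, hΘ.apply 0 2, hΘ.apply 1 2]

def CauchyConstraint (e : Fin 3 → Module.Dual ℝ 𝔤) (Θ : Matrix (Fin 3) (Fin 3) ℝ) : Prop :=
  ∀ (a : Fin 3) (X Y : 𝔤), -(e a ⁅X, Y⁆) = ∑ b, Θ a b * (e b X * e 0 Y - e b Y * e 0 X)

namespace CauchyConstraint

variable {e : Fin 3 → Module.Dual ℝ 𝔤} {q : Fin 3} {a c : ℝ}

theorem apply_lie_zero (h : CauchyConstraint e (planeMatrix 0 q a c)) (hq : q ≠ 0) (X Y : 𝔤) :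
    e 0 ⁅X, Y⁆ = -(c * (e q X * e 0 Y - e q Y * e 0 X)) := by
  linear_combination -(h 0 X Y) - planeMatrix_sum_mul_left a c _ hq.symm

theorem apply_lie_right (h : CauchyConstraint e (planeMatrix 0 q a c)) (hq : q ≠ 0) (X Y : 𝔤) :
    e q ⁅X, Y⁆ = a * (e q X * e 0 Y - e q Y * e 0 X) := by
  linear_combination -(h q X Y) - planeMatrix_sum_mul_right a c _ hq.symm

theorem apply_lie_of_ne (h : CauchyConstraint e (planeMatrix 0 q a c)) {b : Fin 3} (hb0 : b ≠ 0)
    (hbq : b ≠ q) (X Y : 𝔤) : e b ⁅X, Y⁆ = 0 := by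
  linear_combination -(h b X Y) - planeMatrix_sum_mul_of_ne a c _ hb0 hbq

end CauchyConstraint

section PlaneFlow

variable {q : Fin 3} {a c : ℝ} {e : Fin 3 → Module.Dual ℝ 𝔤} {α β γ δ θ lam : ℝ → ℝ}
  {eT : ℝ → Fin 3 → Module.Dual ℝ 𝔤} {Θfam : ℝ → Matrix (Fin 3) (Fin 3) ℝ} {t : ℝ}

theorem F1At_of_planeMatrix (hq : q ≠ 0) (heT0 : ∀ s, eT s 0 = α s • e 0 + β s • e q)
    (heTq : ∀ s, eT s q = γ s • e 0 + δ s • e q) (heT : ∀ s b, b ≠ 0 → b ≠ q → eT s b = e b)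
    (hΘ : ∀ s, Θfam s = planeMatrix 0 q (θ s) c)
    (hα : HasDerivAt α (-(lam t * (θ t * α t + c * γ t))) t)
    (hβ : HasDerivAt β (-(lam t * (θ t * β t + c * δ t))) t)
    (hγ : HasDerivAt γ (-(lam t * (c * α t - θ t * γ t))) t)
    (hδ : HasDerivAt δ (-(lam t * (c * β t - θ t * δ t))) t) :
    F1At lam Θfam eT t := by
  intro b X
  rw [hΘ]
  by_cases hb0 : b = 0
  · subst hb0
    simp only [planeMatrix_sum_mul_left _ _ _ hq.symm, heT0, heTq, LinearMap.add_apply,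
      LinearMap.smul_apply, smul_eq_mul]
    exact ((hα.mul_const _).add (hβ.mul_const _)).congr_deriv (by ring)
  by_cases hbq : b = q
  · subst hbq
    simp only [planeMatrix_sum_mul_right _ _ _ hq.symm, heT0, heTq, LinearMap.add_apply,
      LinearMap.smul_apply, smul_eq_mul]
    exact ((hγ.mul_const _).add (hδ.mul_const _)).congr_deriv (by ring)
  · simp only [planeMatrix_sum_mul_of_ne _ _ _ hb0 hbq, heT _ _ hb0 hbq, mul_zero, neg_zero]
    exact hasDerivAt_const _ _

theorem F2At_of_planeMatrix (hq : q ≠ 0) (he : CauchyConstraint e (planeMatrix 0 q a c))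
    (heT0 : ∀ s, eT s 0 = α s • e 0 + β s • e q)
    (heTq : ∀ s, eT s q = γ s • e 0 + δ s • e q) (heT : ∀ s b, b ≠ 0 → b ≠ q → eT s b = e b)
    (hΘ : ∀ s, Θfam s = planeMatrix 0 q (θ s) c)
    (hcons_u : θ t * α t + c * γ t = a) (hcons_q : θ t * β t + c * δ t = c) :
    F2At Θfam eT t := by
  intro b X Y
  set ω := e q X * e 0 Y - e q Y * e 0 X
  rw [hΘ]
  by_cases hb0 : b = 0
  · subst hb0
    simp only [planeMatrix_sum_mul_left _ _ _ hq.symm, heT0, heTq, LinearMap.add_apply,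
      LinearMap.smul_apply, smul_eq_mul, he.apply_lie_zero hq, he.apply_lie_right hq]
    linear_combination (β t * ω) * hcons_u - (α t * ω) * hcons_q
  by_cases hbq : b = q
  · subst hbq
    simp only [planeMatrix_sum_mul_right _ _ _ hq.symm, heT0, heTq, LinearMap.add_apply,
      LinearMap.smul_apply, smul_eq_mul, he.apply_lie_zero hq, he.apply_lie_right hq]
    linear_combination (δ t * ω) * hcons_u - (γ t * ω) * hcons_q
  · simp [planeMatrix_sum_mul_of_ne _ _ _ hb0 hbq, heT _ _ hb0 hbq, he.apply_lie_of_ne hb0 hbq]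

theorem F3At_of_planeMatrix (hq : q ≠ 0) (heT0 : ∀ s, eT s 0 = α s • e 0 + β s • e q)
    (heTq : ∀ s, eT s q = γ s • e 0 + δ s • e q) (hΘ : ∀ s, Θfam s = planeMatrix 0 q (θ s) c)
    (hcons_u : ∀ s, θ s * α s + c * γ s = a) (hcons_q : ∀ s, θ s * β s + c * δ s = c) :
    F3At Θfam eT t := by
  intro X
  have hconst : (fun s => ∑ b, Θfam s 0 b * eT s b X) = fun _ => a * e 0 X + c * e q X := by
    funext s
    simp only [hΘ, planeMatrix_sum_mul_left _ _ _ hq.symm, heT0, heTq, LinearMap.add_apply,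
      LinearMap.smul_apply, smul_eq_mul]
    linear_combination e 0 X * hcons_u s + e q X * hcons_q s
  rw [hconst]
  exact hasDerivAt_const _ _

theorem F4At_of_planeMatrix (hq : q ≠ 0) (he : CauchyConstraint e (planeMatrix 0 q a c))
    (heT0 : ∀ s, eT s 0 = α s • e 0 + β s • e q)
    (heTq : ∀ s, eT s q = γ s • e 0 + δ s • e q) (hΘ : ∀ s, Θfam s = planeMatrix 0 q (θ s) c)
    (hcons_u : θ t * α t + c * γ t = a) (hcons_q : θ t * β t + c * δ t = c) :
    F4At Θfam eT t := by
  intro X Y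
  simp only [hΘ, planeMatrix_sum_mul_left _ _ _ hq.symm, heT0, heTq, LinearMap.add_apply,
    LinearMap.smul_apply, smul_eq_mul, he.apply_lie_zero hq, he.apply_lie_right hq]
  linear_combination (-(c * (e q X * e 0 Y - e q Y * e 0 X))) * hcons_u
    + (a * (e q X * e 0 Y - e q Y * e 0 X)) * hcons_q

end PlaneFlow

section Coefficients

variable {a c k : ℝ} {lam B τ : ℝ → ℝ} {t : ℝ}

theorem hasDerivAt_flowCoeff_γ (hc : c ≠ 0) (hk : k ^ 2 = c ^ 2)
    (hB : HasDerivAt B (lam t) t) (hτ : HasDerivAt τ ((1 + τ t ^ 2) * (k * lam t)) t) :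
    HasDerivAt (fun s => a / c - k / c * (1 - a * B s) * τ s)
      (-(lam t * (c * (1 - a * B t) - k * τ t * (a / c - k / c * (1 - a * B t) * τ t)))) t := by
  refine ((((hB.const_mul a).const_sub 1).const_mul (k / c)).mul hτ).const_sub _
    |>.congr_deriv ?_
  field_simp
  linear_combination (-(lam t) * (1 - a * B t)) * hk

theorem hasDerivAt_flowCoeff_δ (hk : k ^ 2 = c ^ 2)
    (hB : HasDerivAt B (lam t) t) (hτ : HasDerivAt τ ((1 + τ t ^ 2) * (k * lam t)) t) :
    HasDerivAt (fun s => 1 + k * B s * τ s)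
      (-(lam t * (c * -(c * B t) - k * τ t * (1 + k * B t * τ t)))) t := by
  refine (((hB.const_mul k).mul hτ).const_add 1).congr_deriv ?_
  linear_combination (lam t * B t) * hk

end Coefficients

theorem parallelSpinorFlow_of_planeMatrix {q : Fin 3} (hq : q ≠ 0) {a c k : ℝ} (hc : c ≠ 0)
    (hk : k ^ 2 = c ^ 2) {e : Fin 3 → Module.Dual ℝ 𝔤}
    (he : CauchyConstraint e (planeMatrix 0 q a c)) {lam : ℝ → ℝ} (hlam : Continuous lam)
    {y : ℝ → ℝ} (hy : ∀ t, y t = k * Bfun lam t + arctan (a / k))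
    {eT : ℝ → Fin 3 → Module.Dual ℝ 𝔤}
    (heT0 : ∀ t, eT t 0 = (1 - a * Bfun lam t) • e 0 - (c * Bfun lam t) • e q)
    (heTq : ∀ t, eT t q = (a / c - k / c * (1 - a * Bfun lam t) * tan (y t)) • e 0
      + (1 + k * Bfun lam t * tan (y t)) • e q)
    (heT : ∀ t b, b ≠ 0 → b ≠ q → eT t b = e b) {Θfam : ℝ → Matrix (Fin 3) (Fin 3) ℝ}
    (hΘ : ∀ t, Θfam t = planeMatrix 0 q (k * tan (y t)) c) :
    (∀ t, cos (y t) ≠ 0 →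
      F1At lam Θfam eT t ∧ F2At Θfam eT t ∧ F3At Θfam eT t ∧ F4At Θfam eT t) ∧ eT 0 = e := by
  have heT0' (t : ℝ) : eT t 0 = (1 - a * Bfun lam t) • e 0 + (-(c * Bfun lam t)) • e q := by
    rw [heT0]; module
  have hcons_u (t : ℝ) : k * tan (y t) * (1 - a * Bfun lam t)
      + c * (a / c - k / c * (1 - a * Bfun lam t) * tan (y t)) = a := by
    field_simp; ring
  have hcons_q (t : ℝ) :
      k * tan (y t) * -(c * Bfun lam t) + c * (1 + k * Bfun lam t * tan (y t)) = c := by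
    ring
  refine ⟨fun t hcos => ?_, ?_⟩
  · have hB := hasDerivAt_Bfun hlam t
    have hτ : HasDerivAt (fun s => tan (y s)) ((1 + tan (y t) ^ 2) * (k * lam t)) t := by
      refine HasDerivAt.tan ?_ hcos
      rw [show y = fun s => k * Bfun lam s + arctan (a / k) from funext hy]
      exact (hB.const_mul k).add_const _
    refine ⟨F1At_of_planeMatrix hq heT0' heTq heT hΘ ?_ ?_
        (hasDerivAt_flowCoeff_γ hc hk hB hτ) (hasDerivAt_flowCoeff_δ hk hB hτ),
      F2At_of_planeMatrix hq he heT0' heTq heT hΘ (hcons_u t) (hcons_q t),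
      F3At_of_planeMatrix hq heT0' heTq hΘ hcons_u hcons_q,
      F4At_of_planeMatrix hq he heT0' heTq hΘ (hcons_u t) (hcons_q t)⟩
    · exact ((hB.const_mul a).const_sub 1).congr_deriv (by rw [hcons_u]; ring)
    · exact (hB.const_mul c).neg.congr_deriv (by rw [hcons_q]; ring)
  · have hk0 : k ≠ 0 := by rintro rfl; exact hc (by simpa using hk.symm)
    have hy0 : tan (y 0) = a / k := by rw [hy, Bfun_zero, mul_zero, zero_add, tan_arctan]
    funext b
    by_cases hb0 : b = 0
    · simp [hb0, heT0]
    by_cases hbq : b = q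
    · subst hbq
      rw [heTq, Bfun_zero, hy0]
      field_simp
      simp
    · exact heT 0 b hb0 hbq

theorem offDiagonal_parallel_spinor_flow_general
    {𝔤 : Type*} [LieRing 𝔤] [LieAlgebra ℝ 𝔤]
    (e : Fin 3 → Module.Dual ℝ 𝔤) (Θ : Matrix (Fin 3) (Fin 3) ℝ)
    (hCauchy : IsCauchyPair e Θ)
    (lam : ℝ → ℝ) (hlam : ContDiff ℝ (⊤ : ℕ∞) lam) :
    -- Case (i): Θ_{ul} = 0, Θ_{un} ≠ 0
    ((Θ 0 1 = 0 ∧ Θ 0 2 ≠ 0 ∧ Θ 1 1 = 0 ∧ Θ 1 2 = 0 ∧ Θ 2 2 = -Θ 0 0) →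
      ∀ (y : ℝ → ℝ),
        (∀ t, y t = |Θ 0 2| * Bfun lam t + Real.arctan (Θ 0 0 / |Θ 0 2|)) →
      ∀ (I : Set ℝ), (0:ℝ) ∈ I → I.OrdConnected →
        (∀ t ∈ I, Real.cos (y t) ≠ 0) →
      ∀ (eT : ℝ → Fin 3 → Module.Dual ℝ 𝔤),
        (∀ t, eT t 0 = (1 - Θ 0 0 * Bfun lam t) • e 0 - (Θ 0 2 * Bfun lam t) • e 2) →
        (∀ t, eT t 1 = e 1) →
        (∀ t, eT t 2 =
          (Θ 0 0 / Θ 0 2 - |Θ 0 2| / Θ 0 2 * (1 - Θ 0 0 * Bfun lam t) * Real.tan (y t)) • e 0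
          + (1 + |Θ 0 2| * Bfun lam t * Real.tan (y t)) • e 2) →
      ∀ (Θfam : ℝ → Matrix (Fin 3) (Fin 3) ℝ),
        (∀ t, Θfam t = !![|Θ 0 2| * Real.tan (y t), 0, Θ 0 2;
                          0, 0, 0;
                          Θ 0 2, 0, -(|Θ 0 2| * Real.tan (y t))]) →
      (∀ t ∈ I, F1At lam Θfam eT t ∧ F2At Θfam eT t ∧ F3At Θfam eT t ∧ F4At Θfam eT t) ∧
        eT 0 = e) ∧
    -- Case (ii): Θ_{un} = 0, Θ_{ul} ≠ 0
    ((Θ 0 2 = 0 ∧ Θ 0 1 ≠ 0 ∧ Θ 2 2 = 0 ∧ Θ 1 2 = 0 ∧ Θ 1 1 = -Θ 0 0) →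
      ∀ (y : ℝ → ℝ),
        (∀ t, y t = |Θ 0 1| * Bfun lam t + Real.arctan (Θ 0 0 / |Θ 0 1|)) →
      ∀ (I : Set ℝ), (0:ℝ) ∈ I → I.OrdConnected →
        (∀ t ∈ I, Real.cos (y t) ≠ 0) →
      ∀ (eT : ℝ → Fin 3 → Module.Dual ℝ 𝔤),
        (∀ t, eT t 0 = (1 - Θ 0 0 * Bfun lam t) • e 0 - (Θ 0 1 * Bfun lam t) • e 1) →
        (∀ t, eT t 2 = e 2) →
        (∀ t, eT t 1 =
          (Θ 0 0 / Θ 0 1 - |Θ 0 1| / Θ 0 1 * (1 - Θ 0 0 * Bfun lam t) * Real.tan (y t)) • e 0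
          + (1 + |Θ 0 1| * Bfun lam t * Real.tan (y t)) • e 1) →
      ∀ (Θfam : ℝ → Matrix (Fin 3) (Fin 3) ℝ),
        (∀ t, Θfam t = !![|Θ 0 1| * Real.tan (y t), Θ 0 1, 0;
                          Θ 0 1, -(|Θ 0 1| * Real.tan (y t)), 0;
                          0, 0, 0]) →
      (∀ t ∈ I, F1At lam Θfam eT t ∧ F2At Θfam eT t ∧ F3At Θfam eT t ∧ F4At Θfam eT t) ∧
        eT 0 = e) := by
  obtain ⟨-, hsymm, hC⟩ := hCauchy
  refine ⟨?_, ?_⟩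
  · rintro ⟨h01, h02, h11, h12, h22⟩ y hy I - - hcos eT heT0 heT1 heT2 Θfam hΘfam
    rw [hsymm.eq_planeMatrix_zero_two h01 h11 h12 h22] at hC
    obtain ⟨hflow, hinit⟩ := parallelSpinorFlow_of_planeMatrix (q := 2) (by decide) h02 (sq_abs _)
      hC hlam.continuous hy heT0 heT2
      (fun t b h0 h2 => by fin_cases b <;> first | exact heT1 t | contradiction)
      (fun t => (hΘfam t).trans (planeMatrix_zero_two _ _).symm)
    exact ⟨fun t ht => hflow t (hcos t ht), hinit⟩
  · rintro ⟨h02, h01, h22, h12, h11⟩ y hy I - - hcos eT heT0 heT2 heT1 Θfam hΘfam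
    rw [hsymm.eq_planeMatrix_zero_one h02 h22 h12 h11] at hC
    obtain ⟨hflow, hinit⟩ := parallelSpinorFlow_of_planeMatrix (q := 1) (by decide) h01 (sq_abs _)
      hC hlam.continuous hy heT0 heT1
      (fun t b h0 h1 => by fin_cases b <;> first | exact heT2 t | contradiction)
      (fun t => (hΘfam t).trans (planeMatrix_zero_one _ _).symm)
    exact ⟨fun t ht => hflow t (hcos t ht), hinit⟩

/-- Classification of left-invariant parallel spinor flows with `Θ_{ul}Θ_{un} = 0` but
`Θ_{ul}² + Θ_{un}² ≠ 0`: in each of the two cases the explicit trigonometric family of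
coframes and shape operators is a left-invariant parallel spinor flow with initial
coframe `e`. -/
theorem offDiagonal_parallel_spinor_flow
    {𝔤 : Type*} [LieRing 𝔤] [LieAlgebra ℝ 𝔤]
    (hdim : Module.finrank ℝ 𝔤 = 3)
    (e : Fin 3 → Module.Dual ℝ 𝔤) (Θ : Matrix (Fin 3) (Fin 3) ℝ)
    (hCauchy : IsCauchyPair e Θ)
    (lam : ℝ → ℝ) (hlam : ContDiff ℝ (⊤ : ℕ∞) lam) (hlam0 : ∀ t, lam t ≠ 0) :
    -- Case (i): Θ_{ul} = 0, Θ_{un} ≠ 0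
    ((Θ 0 1 = 0 ∧ Θ 0 2 ≠ 0 ∧ Θ 1 1 = 0 ∧ Θ 1 2 = 0 ∧ Θ 2 2 = -Θ 0 0) →
      ∀ (y : ℝ → ℝ),
        (∀ t, y t = |Θ 0 2| * Bfun lam t + Real.arctan (Θ 0 0 / |Θ 0 2|)) →
      ∀ (I : Set ℝ), (0:ℝ) ∈ I → I.OrdConnected →
        (∀ t ∈ I, Real.cos (y t) ≠ 0) →
      ∀ (eT : ℝ → Fin 3 → Module.Dual ℝ 𝔤),
        (∀ t, eT t 0 = (1 - Θ 0 0 * Bfun lam t) • e 0 - (Θ 0 2 * Bfun lam t) • e 2) →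
        (∀ t, eT t 1 = e 1) →
        (∀ t, eT t 2 =
          (Θ 0 0 / Θ 0 2 - |Θ 0 2| / Θ 0 2 * (1 - Θ 0 0 * Bfun lam t) * Real.tan (y t)) • e 0
          + (1 + |Θ 0 2| * Bfun lam t * Real.tan (y t)) • e 2) →
      ∀ (Θfam : ℝ → Matrix (Fin 3) (Fin 3) ℝ),
        (∀ t, Θfam t = !![|Θ 0 2| * Real.tan (y t), 0, Θ 0 2;
                          0, 0, 0;
                          Θ 0 2, 0, -(|Θ 0 2| * Real.tan (y t))]) →
      (∀ t ∈ I, F1At lam Θfam eT t ∧ F2At Θfam eT t ∧ F3At Θfam eT t ∧ F4At Θfam eT t) ∧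
        eT 0 = e) ∧
    -- Case (ii): Θ_{un} = 0, Θ_{ul} ≠ 0
    ((Θ 0 2 = 0 ∧ Θ 0 1 ≠ 0 ∧ Θ 2 2 = 0 ∧ Θ 1 2 = 0 ∧ Θ 1 1 = -Θ 0 0) →
      ∀ (y : ℝ → ℝ),
        (∀ t, y t = |Θ 0 1| * Bfun lam t + Real.arctan (Θ 0 0 / |Θ 0 1|)) →
      ∀ (I : Set ℝ), (0:ℝ) ∈ I → I.OrdConnected →
        (∀ t ∈ I, Real.cos (y t) ≠ 0) →
      ∀ (eT : ℝ → Fin 3 → Module.Dual ℝ 𝔤),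
        (∀ t, eT t 0 = (1 - Θ 0 0 * Bfun lam t) • e 0 - (Θ 0 1 * Bfun lam t) • e 1) →
        (∀ t, eT t 2 = e 2) →
        (∀ t, eT t 1 =
          (Θ 0 0 / Θ 0 1 - |Θ 0 1| / Θ 0 1 * (1 - Θ 0 0 * Bfun lam t) * Real.tan (y t)) • e 0
          + (1 + |Θ 0 1| * Bfun lam t * Real.tan (y t)) • e 1) →
      ∀ (Θfam : ℝ → Matrix (Fin 3) (Fin 3) ℝ),
        (∀ t, Θfam t = !![|Θ 0 1| * Real.tan (y t), Θ 0 1, 0;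
                          Θ 0 1, -(|Θ 0 1| * Real.tan (y t)), 0;
                          0, 0, 0]) →
      (∀ t ∈ I, F1At lam Θfam eT t ∧ F2At Θfam eT t ∧ F3At Θfam eT t ∧ F4At Θfam eT t) ∧
        eT 0 = e) :=
  offDiagonal_parallel_spinor_flow_general e Θ hCauchy lam hlam
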